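/- Suppose H(θ) > θ·h_m + (p' ∫₀¹ D(u)^{p'−1} g(u) du)^{1/p'} and h_m = h(0). Then the traveling-wave problem with speed c has no solution for any c ∈ ℝ. -/

import Mathlib

open Set MeasureTheory Filter

/-- The conjugate exponent `p' = p/(p-1)`. -/
noncomputable def pconj (p : ℝ) : ℝ := p / (p - 1)

/-- The constant `k(p)` from the paper. -/
noncomputable def kfun (p : ℝ) : ℝ :=
  if p < 2 then 1 / (2 ^ (pconj p - 1) - 1)
  else if p = 2 then 1
  else pconj p / (pconj p - 1 +
    (1 + pconj p * (pconj p - 1) ^ ((1 : ℝ) / (pconj p - 2)) +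
      (pconj p - 1) ^ (pconj p / (pconj p - 2))) /
    (1 + (pconj p - 1) ^ ((1 : ℝ) / (pconj p - 2))) ^ pconj p)

/-- Standing assumptions on the data `p, θ, D, H, h, g` (combustion setting). -/
structure CombSetup (p θ : ℝ) (D H h g : ℝ → ℝ) : Prop where
  hp : 1 < p
  hθ0 : 0 < θ
  hθ1 : θ < 1
  hD : ContDiffOn ℝ 1 D (Ioo 0 1)
  hDpos : ∀ v ∈ Ioo (0 : ℝ) 1, 0 < D v
  hH : ContDiffOn ℝ 1 H (Icc 0 1)
  hH0 : H 0 = 0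
  hh : ContinuousOn h (Icc 0 1)
  hHd : ∀ v ∈ Icc (0 : ℝ) 1, HasDerivWithinAt H (h v) (Icc 0 1) v
  hgc : ContinuousOn g (Icc 0 1)
  hg0 : ∀ v ∈ Icc (0 : ℝ) θ, g v = 0
  hgpos : ∀ v ∈ Ioo θ 1, 0 < g v
  hg1 : g 1 = 0
  hInt : IntegrableOn (fun v => D v ^ (pconj p - 1) * g v) (Ioo 0 1)

/-- The diffusive flux `ξ ↦ D(u(ξ)) |u'(ξ)|^{p-2} u'(ξ)`. -/
noncomputable def flux (p : ℝ) (D u : ℝ → ℝ) : ℝ → ℝ :=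
  fun ξ => D (u ξ) * (|deriv u ξ| ^ (p - 2) * deriv u ξ)

/-- Solution of the traveling-wave problem with speed `c`. -/
structure IsTWSol (p c : ℝ) (D h g : ℝ → ℝ) (u : ℝ → ℝ) : Prop where
  cont : Continuous u
  mem : ∀ ξ, u ξ ∈ Icc (0 : ℝ) 1
  smooth : ContDiffOn ℝ 1 u {ξ | u ξ ∈ Ioo (0 : ℝ) 1}
  eqn : ∀ ξ ∈ {ξ | u ξ ∈ Ioo (0 : ℝ) 1},
    HasDerivAt (flux p D u) (-(c + h (u ξ)) * deriv u ξ - g (u ξ)) ξ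
  flux_cont : Continuous (fun ξ => if u ξ ∈ Ioo (0 : ℝ) 1 then flux p D u ξ else 0)
  flux_to0 : ∀ ε > 0, ∃ δ > 0, ∀ ξ, u ξ ∈ Ioo (0 : ℝ) 1 → u ξ < δ → |flux p D u ξ| < ε
  flux_to1 : ∀ ε > 0, ∃ δ > 0, ∀ ξ, u ξ ∈ Ioo (0 : ℝ) 1 → 1 - δ < u ξ → |flux p D u ξ| < ε
  lim_bot : Tendsto u atBot (nhds 1)
  lim_top : Tendsto u atTop (nhds 0)

/-- Positive solution of the first-order problem with parameter `c`. -/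
structure IsFOSol (p c : ℝ) (D h g : ℝ → ℝ) (y : ℝ → ℝ) : Prop where
  cont : ContinuousOn y (Icc 0 1)
  eqn : ∀ v ∈ Ioo (0 : ℝ) 1, HasDerivAt y
    (pconj p * ((c + h v) * (max (y v) 0) ^ (1 / p) - D v ^ (pconj p - 1) * g v)) v
  y0 : y 0 = 0
  y1 : y 1 = 0
  pos : ∀ v ∈ Ioo (0 : ℝ) 1, 0 < y v

open Topology

/-! Let `F` be the flux and `q = p'`. Where `u ≤ θ` the reaction vanishes, so
`F + c u + H(u)` is constant along the wave; reading it off at the last time `α` with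
`u(α) = θ`, where `u' ≤ 0`, gives `|F(α)| = c θ + H(θ)`. Applying the same first integral at
levels `v → 0⁺` gives `c + h(0) ≥ 0`, hence `c + h ≥ 0` on `[0,1]` because `h(0) = h_m`. Then
`|F|^{p'} + p' ∫₀^u D^{p'-1} g` is nonincreasing in `ξ`, so its value `(c θ + H(θ))^{p'}` at `α`
is at most `p' ∫₀¹ D^{p'-1} g`. Together with `-c ≤ h_m` this contradicts the hypothesis. -/

lemma one_lt_pconj {p : ℝ} (hp : 1 < p) : 1 < pconj p := by
  rw [pconj, lt_div_iff₀ (by linarith)]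
  linarith

lemma sub_one_mul_pconj_sub_one {p : ℝ} (hp : 1 < p) : (p - 1) * (pconj p - 1) = 1 := by
  have : p - 1 ≠ 0 := by linarith
  rw [pconj]
  field_simp
  ring

/-- `w ↦ |w|^{p'-2} w` inverts `s ↦ |s|^{p-2} s`, here with the weight `d`. -/
lemma abs_rpow_pconj_sub_two_mul_flux {p d s : ℝ} (hp : 1 < p) (hd : 0 < d) :
    |d * (|s| ^ (p - 2) * s)| ^ (pconj p - 2) * (d * (|s| ^ (p - 2) * s))
      = d ^ (pconj p - 1) * s := by
  set q := pconj p
  rcases eq_or_ne s 0 with rfl | hs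
  · simp
  have has : 0 < |s| := abs_pos.mpr hs
  have habs : |d * (|s| ^ (p - 2) * s)| = d * |s| ^ (p - 1) := by
    rw [abs_mul, abs_mul, abs_of_pos hd, abs_of_nonneg (Real.rpow_nonneg (abs_nonneg s) _),
      show p - 1 = (p - 2) + 1 by ring, Real.rpow_add_one has.ne']
  have hexp : (p - 1) * (q - 2) + (p - 2) = 0 := by
    linarith [sub_one_mul_pconj_sub_one hp]
  calc |d * (|s| ^ (p - 2) * s)| ^ (q - 2) * (d * (|s| ^ (p - 2) * s))
      = (d ^ (q - 2) * d) * ((|s| ^ ((p - 1) * (q - 2)) * |s| ^ (p - 2)) * s) := by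
        rw [habs, Real.mul_rpow hd.le (Real.rpow_nonneg (abs_nonneg s) _),
          ← Real.rpow_mul (abs_nonneg s)]
        ring
    _ = d ^ (q - 1) * s := by
        rw [← Real.rpow_add_one hd.ne', ← Real.rpow_add has, hexp, Real.rpow_zero, one_mul]
        ring_nf

lemma HasDerivWithinAt.nonneg_of_eventually_le {f : ℝ → ℝ} {f' x : ℝ}
    (hf : HasDerivWithinAt f f' (Ioi x) x) (hle : ∀ᶠ y in 𝓝[>] x, f x ≤ f y) : 0 ≤ f' := by
  have hslope : Tendsto (slope f x) (𝓝[>] x) (𝓝 f') := by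
    simpa using hasDerivWithinAt_iff_tendsto_slope.mp hf
  refine ge_of_tendsto hslope ?_
  filter_upwards [hle, self_mem_nhdsWithin] with y hy hxy
  rw [slope_def_field]
  exact div_nonneg (sub_nonneg.mpr hy) (sub_nonneg.mpr (le_of_lt hxy))

lemma le_of_hasDerivAt_nonpos {f f' : ℝ → ℝ} {a b : ℝ} (hab : a ≤ b)
    (hf : ContinuousOn f (Icc a b)) (hf' : ∀ x ∈ Ioo a b, HasDerivAt f (f' x) x)
    (hnp : ∀ x ∈ Ioo a b, f' x ≤ 0) : f b ≤ f a := by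
  refine antitoneOn_of_hasDerivWithinAt_nonpos (f' := f') (convex_Icc a b) hf ?_ ?_
    (left_mem_Icc.mpr hab) (right_mem_Icc.mpr hab) hab
  · simpa only [interior_Icc] using fun x hx => (hf' x hx).hasDerivWithinAt
  · simpa only [interior_Icc] using hnp

lemma eq_of_hasDerivAt_zero {f : ℝ → ℝ} {a b : ℝ} (hab : a ≤ b)
    (hf : ContinuousOn f (Icc a b)) (hf' : ∀ x ∈ Ioo a b, HasDerivAt f 0 x) : f b = f a := by
  have hle := le_of_hasDerivAt_nonpos (f' := fun _ => 0) hab hf hf' fun _ _ => le_rfl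
  have hge := le_of_hasDerivAt_nonpos (f := fun x => -f x) (f' := fun _ => 0) hab hf.neg
    (fun x hx => (hf' x hx).neg.congr_deriv neg_zero) fun _ _ => le_rfl
  linarith

lemma Continuous.exists_lastCrossing {u : ℝ → ℝ} {v : ℝ} (hu : Continuous u)
    (htop : ∀ᶠ ξ in atTop, u ξ < v) (hreach : ∃ ξ, v ≤ u ξ) :
    ∃ α, u α = v ∧ ∀ ξ, α < ξ → u ξ < v := by
  set A := {ξ | v ≤ u ξ}
  have hA_bdd : BddAbove A := by
    obtain ⟨B, hB⟩ := eventually_atTop.mp htop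
    exact ⟨B, fun ξ hξ => le_of_not_ge fun hBξ => (hB ξ hBξ).not_ge hξ⟩
  have hlt : ∀ ξ, sSup A < ξ → u ξ < v := fun ξ hξ =>
    lt_of_not_ge fun hv => (le_csSup hA_bdd hv).not_gt hξ
  refine ⟨sSup A, le_antisymm ?_ ((isClosed_le continuous_const hu).csSup_mem hreach hA_bdd), hlt⟩
  exact le_of_tendsto ((hu.tendsto _).mono_left (nhdsWithin_le_nhds (s := Ioi (sSup A))))
    (eventually_nhdsWithin_of_forall fun ξ hξ => (hlt ξ hξ).le)

lemma eq_of_tendsto_atTop_of_gaps {Φ : ℝ → ℝ} {s : Set ℝ} {α L : ℝ} (hs : IsClosed s)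
    (hα : α ∉ s) (hgap : ∀ x, α < x → Disjoint (Ioo α x) s → Φ x = Φ α)
    (hlim : Tendsto Φ atTop (𝓝 L)) (hsL : ∀ b ∈ s, α < b → Φ b = L) : Φ α = L := by
  by_cases hne : (s ∩ Ioi α).Nonempty
  · have hbdd : BddBelow (s ∩ Ici α) := ⟨α, fun _ hy => hy.2⟩
    have hb := (hs.inter isClosed_Ici).csInf_mem (hne.mono (inter_subset_inter_right _
      Ioi_subset_Ici_self)) hbdd
    have hαb : α < sInf (s ∩ Ici α) := hb.2.lt_of_ne fun h => hα (h ▸ hb.1)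
    rw [← hgap _ hαb ?_, hsL _ hb.1 hαb]
    exact disjoint_left.mpr fun y hy hys => (csInf_le hbdd ⟨hys, hy.1.le⟩).not_gt hy.2
  · refine tendsto_nhds_unique (tendsto_const_nhds.congr' ?_) hlim
    filter_upwards [eventually_gt_atTop α] with x hx
    exact (hgap x hx (disjoint_left.mpr fun y hy hys => hne ⟨y, hys, hy.1⟩)).symm

lemma le_of_tendsto_atBot_of_gaps {Φ : ℝ → ℝ} {s : Set ℝ} {α L : ℝ} (hs : IsClosed s)
    (hα : α ∉ s) (hgap : ∀ x, x < α → Disjoint (Ioo x α) s → Φ α ≤ Φ x)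
    (hlim : Tendsto Φ atBot (𝓝 L)) (hsL : ∀ a ∈ s, a < α → Φ a ≤ L) : Φ α ≤ L := by
  by_cases hne : (s ∩ Iio α).Nonempty
  · have hbdd : BddAbove (s ∩ Iic α) := ⟨α, fun _ hy => hy.2⟩
    have ha := (hs.inter isClosed_Iic).csSup_mem (hne.mono (inter_subset_inter_right _
      Iio_subset_Iic_self)) hbdd
    have haα : sSup (s ∩ Iic α) < α := ha.2.lt_of_ne fun h => hα (h ▸ ha.1)
    refine (hgap _ haα ?_).trans (hsL _ ha.1 haα)
    exact disjoint_left.mpr fun y hy hys => (le_csSup hbdd ⟨hys, hy.2.le⟩).not_gt hy.1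
  · refine ge_of_tendsto hlim ?_
    filter_upwards [eventually_lt_atBot α] with x hx
    exact hgap x hx (disjoint_left.mpr fun y hy hys => hne ⟨y, hys, hy.2⟩)

noncomputable def extFlux (p : ℝ) (D u : ℝ → ℝ) (ξ : ℝ) : ℝ :=
  if u ξ ∈ Ioo (0 : ℝ) 1 then flux p D u ξ else 0

noncomputable def reactionPrimitive (p : ℝ) (D g : ℝ → ℝ) (x : ℝ) : ℝ :=
  ∫ t in (0 : ℝ)..x, D t ^ (pconj p - 1) * g t

lemma reactionPrimitive_one (p : ℝ) (D g : ℝ → ℝ) :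
    reactionPrimitive p D g 1 = ∫ v in Ioo (0 : ℝ) 1, D v ^ (pconj p - 1) * g v := by
  rw [reactionPrimitive, intervalIntegral.integral_of_le zero_le_one, integral_Ioc_eq_integral_Ioo]

namespace CombSetup

variable {p θ : ℝ} {D H h g : ℝ → ℝ}

lemma g_nonneg (S : CombSetup p θ D H h g) {t : ℝ} (ht : t ∈ Icc (0 : ℝ) 1) : 0 ≤ g t := by
  rcases le_or_gt t θ with htθ | htθ
  · rw [S.hg0 t ⟨ht.1, htθ⟩]
  rcases ht.2.lt_or_eq with ht1 | rfl
  · exact (S.hgpos t ⟨htθ, ht1⟩).le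
  · rw [S.hg1]

lemma integrand_nonneg (S : CombSetup p θ D H h g) {t : ℝ} (ht : t ∈ Icc (0 : ℝ) 1) :
    0 ≤ D t ^ (pconj p - 1) * g t := by
  rcases eq_or_ne (g t) 0 with hg | hg
  · rw [hg, mul_zero]
  have ht' : t ∈ Ioo (0 : ℝ) 1 := ⟨ht.1.lt_of_ne fun h => hg (S.hg0 t ⟨h ▸ le_rfl, h ▸ S.hθ0.le⟩),
    ht.2.lt_of_ne fun h => hg (h ▸ S.hg1)⟩
  exact mul_nonneg (Real.rpow_nonneg (S.hDpos t ht').le _) (S.g_nonneg ht)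

lemma integrableOn_Icc (S : CombSetup p θ D H h g) :
    IntegrableOn (fun t => D t ^ (pconj p - 1) * g t) (Icc 0 1) :=
  (integrableOn_Icc_iff_integrableOn_Ioo).mpr S.hInt

lemma continuousOn_reactionPrimitive (S : CombSetup p θ D H h g) :
    ContinuousOn (reactionPrimitive p D g) (Icc 0 1) := by
  have := intervalIntegral.continuousOn_primitive_interval (a := (0 : ℝ)) (b := 1) (μ := volume)
    (by simpa only [uIcc_of_le zero_le_one] using S.integrableOn_Icc)
  rwa [uIcc_of_le zero_le_one] at this

lemma hasDerivAt_reactionPrimitive (S : CombSetup p θ D H h g) {w : ℝ}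
    (hw : w ∈ Ioo (0 : ℝ) 1) :
    HasDerivAt (reactionPrimitive p D g) (D w ^ (pconj p - 1) * g w) w := by
  have hcont : ContinuousOn (fun t => D t ^ (pconj p - 1) * g t) (Ioo 0 1) :=
    (S.hD.continuousOn.rpow_const fun _ _ => Or.inr (by linarith [one_lt_pconj S.hp])).mul
      (S.hgc.mono Ioo_subset_Icc_self)
  refine intervalIntegral.integral_hasDerivAt_right ?_
    (hcont.stronglyMeasurableAtFilter isOpen_Ioo w hw) (hcont.continuousAt (isOpen_Ioo.mem_nhds hw))
  rw [intervalIntegrable_iff_integrableOn_Ioc_of_le hw.1.le]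
  exact S.integrableOn_Icc.mono_set fun t ht => ⟨ht.1.le, ht.2.trans hw.2.le⟩

lemma reactionPrimitive_eq_zero (S : CombSetup p θ D H h g) {w : ℝ}
    (hw : w ∈ Icc 0 θ) : reactionPrimitive p D g w = 0 := by
  rw [reactionPrimitive, intervalIntegral.integral_congr (g := fun _ => (0 : ℝ)),
    intervalIntegral.integral_zero]
  intro t ht
  rw [uIcc_of_le hw.1] at ht
  simp only [S.hg0 t ⟨ht.1, ht.2.trans hw.2⟩, mul_zero]

lemma reactionPrimitive_le_one (S : CombSetup p θ D H h g) {w : ℝ} (hw : w ∈ Icc (0 : ℝ) 1) :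
    reactionPrimitive p D g w ≤ reactionPrimitive p D g 1 := by
  have hint : ∀ a b : ℝ, a ∈ Icc (0 : ℝ) 1 → b ∈ Icc (0 : ℝ) 1 →
      IntervalIntegrable (fun t => D t ^ (pconj p - 1) * g t) volume a b := fun a b ha hb =>
    (S.integrableOn_Icc.mono_set (uIcc_subset_Icc ha hb)).intervalIntegrable
  have hsplit := intervalIntegral.integral_add_adjacent_intervals
    (hint 0 w ⟨le_rfl, zero_le_one⟩ hw) (hint w 1 hw ⟨zero_le_one, le_rfl⟩)
  have hrest : 0 ≤ ∫ t in w..1, D t ^ (pconj p - 1) * g t :=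
    intervalIntegral.integral_nonneg hw.2 fun t ht => S.integrand_nonneg ⟨hw.1.trans ht.1, ht.2⟩
  rw [reactionPrimitive, reactionPrimitive, ← hsplit]
  exact le_add_of_nonneg_right hrest

end CombSetup

namespace IsTWSol

variable {p θ c : ℝ} {D H h g u : ℝ → ℝ}

lemma isOpen_setOf_mem_Ioo (T : IsTWSol p c D h g u) : IsOpen {ξ | u ξ ∈ Ioo (0 : ℝ) 1} :=
  isOpen_Ioo.preimage T.cont

lemma isClosed_setOf_notMem_Ioo (T : IsTWSol p c D h g u) :
    IsClosed {ξ | u ξ ∉ Ioo (0 : ℝ) 1} :=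
  T.isOpen_setOf_mem_Ioo.isClosed_compl

lemma hasDerivAt (T : IsTWSol p c D h g u) {ξ : ℝ} (hξ : u ξ ∈ Ioo (0 : ℝ) 1) :
    HasDerivAt u (deriv u ξ) ξ :=
  ((T.smooth.differentiableOn one_ne_zero).differentiableAt
    (T.isOpen_setOf_mem_Ioo.mem_nhds hξ)).hasDerivAt

lemma continuous_extFlux (T : IsTWSol p c D h g u) : Continuous (extFlux p D u) :=
  T.flux_cont

lemma extFlux_of_mem {ξ : ℝ} (hξ : u ξ ∈ Ioo (0 : ℝ) 1) : extFlux p D u ξ = flux p D u ξ :=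
  if_pos hξ

lemma extFlux_of_notMem {ξ : ℝ} (hξ : u ξ ∉ Ioo (0 : ℝ) 1) : extFlux p D u ξ = 0 :=
  if_neg hξ

lemma hasDerivAt_extFlux (T : IsTWSol p c D h g u) {ξ : ℝ} (hξ : u ξ ∈ Ioo (0 : ℝ) 1) :
    HasDerivAt (extFlux p D u) (-(c + h (u ξ)) * deriv u ξ - g (u ξ)) ξ :=
  (T.eqn ξ hξ).congr_of_eventuallyEq <|
    eventually_of_mem (T.isOpen_setOf_mem_Ioo.mem_nhds hξ) fun _ hx => extFlux_of_mem hx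

lemma tendsto_extFlux_atTop (T : IsTWSol p c D h g u) :
    Tendsto (extFlux p D u) atTop (𝓝 0) := by
  refine Metric.tendsto_nhds.mpr fun ε hε => ?_
  obtain ⟨δ, hδ, hflux⟩ := T.flux_to0 ε hε
  filter_upwards [T.lim_top.eventually_lt_const hδ] with ξ hξ
  by_cases hmem : u ξ ∈ Ioo (0 : ℝ) 1
  · simpa [extFlux_of_mem hmem] using hflux ξ hmem hξ
  · simpa [extFlux_of_notMem hmem] using hε

lemma tendsto_extFlux_atBot (T : IsTWSol p c D h g u) :
    Tendsto (extFlux p D u) atBot (𝓝 0) := by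
  refine Metric.tendsto_nhds.mpr fun ε hε => ?_
  obtain ⟨δ, hδ, hflux⟩ := T.flux_to1 ε hε
  filter_upwards [T.lim_bot.eventually_const_lt (sub_lt_self 1 hδ)] with ξ hξ
  by_cases hmem : u ξ ∈ Ioo (0 : ℝ) 1
  · simpa [extFlux_of_mem hmem] using hflux ξ hmem hξ
  · simpa [extFlux_of_notMem hmem] using hε

lemma tendsto_nhdsWithin_atTop (T : IsTWSol p c D h g u) :
    Tendsto u atTop (𝓝[Icc 0 1] 0) :=
  tendsto_nhdsWithin_iff.mpr ⟨T.lim_top, Eventually.of_forall T.mem⟩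

lemma tendsto_nhdsWithin_atBot (T : IsTWSol p c D h g u) :
    Tendsto u atBot (𝓝[Icc 0 1] 1) :=
  tendsto_nhdsWithin_iff.mpr ⟨T.lim_bot, Eventually.of_forall T.mem⟩

lemma extFlux_nonpos_of_lastCrossing (S : CombSetup p θ D H h g) (T : IsTWSol p c D h g u)
    {α : ℝ} (hα : u α ∈ Ioo (0 : ℝ) 1) (hlt : ∀ ξ, α < ξ → u ξ < u α) :
    extFlux p D u α ≤ 0 := by
  have hderiv : deriv u α ≤ 0 := by
    refine neg_nonneg.mp ((T.hasDerivAt hα).neg.hasDerivWithinAt.nonneg_of_eventually_le ?_)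
    filter_upwards [self_mem_nhdsWithin] with ξ hξ
    exact neg_le_neg (hlt ξ hξ).le
  rw [extFlux_of_mem hα, flux]
  exact mul_nonpos_of_nonneg_of_nonpos (S.hDpos _ hα).le
    (mul_nonpos_of_nonneg_of_nonpos (Real.rpow_nonneg (abs_nonneg _) _) hderiv)

lemma hasDerivAt_firstIntegral (S : CombSetup p θ D H h g) (T : IsTWSol p c D h g u) {ξ : ℝ}
    (hξ : u ξ ∈ Ioo (0 : ℝ) 1) :
    HasDerivAt (fun ξ => extFlux p D u ξ + c * u ξ + H (u ξ)) (-g (u ξ)) ξ := by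
  have hu := T.hasDerivAt hξ
  have hHu : HasDerivAt (fun ξ => H (u ξ)) (h (u ξ) * deriv u ξ) ξ :=
    hasDerivWithinAt_univ.mp <| (S.hHd _ (T.mem ξ)).comp ξ hu.hasDerivWithinAt fun x _ => T.mem x
  refine (((T.hasDerivAt_extFlux hξ).add (hu.const_mul c)).add hHu).congr_deriv ?_
  ring

/-- Below the ignition level the first integral `F + c u + H(u)` is conserved; it vanishes
both at `+∞` and where `u` reaches `0`. -/
lemma extFlux_eq_of_lastCrossing (S : CombSetup p θ D H h g) (T : IsTWSol p c D h g u)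
    {α v : ℝ} (hv : v ∈ Ioc 0 θ) (hα : u α = v) (hlt : ∀ ξ, α < ξ → u ξ < v) :
    extFlux p D u α = -(c * v + H v) := by
  have hv1 : v < 1 := hv.2.trans_lt S.hθ1
  set G := fun ξ => extFlux p D u ξ + c * u ξ + H (u ξ)
  have hGcont : Continuous G := (T.continuous_extFlux.add (continuous_const.mul T.cont)).add
    (S.hH.continuousOn.comp_continuous T.cont T.mem)
  have hGα : G α = 0 := by
    refine eq_of_tendsto_atTop_of_gaps T.isClosed_setOf_notMem_Ioo
      (by simpa [hα] using And.intro hv.1 hv1)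
      (fun x hαx hgap => eq_of_hasDerivAt_zero hαx.le hGcont.continuousOn fun ξ hξ => ?_) ?_ ?_
    · have hξ' : u ξ ∈ Ioo (0 : ℝ) 1 := by_contra fun h => disjoint_left.mp hgap hξ h
      simpa [S.hg0 (u ξ) ⟨hξ'.1.le, (hlt ξ hξ.1).le.trans hv.2⟩] using
        T.hasDerivAt_firstIntegral S hξ'
    · simpa [S.hH0] using (T.tendsto_extFlux_atTop.add (T.lim_top.const_mul c)).add
        ((S.hH.continuousOn _ (left_mem_Icc.mpr zero_le_one)).tendsto.comp
          T.tendsto_nhdsWithin_atTop)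
    · intro b hb hαb
      have hub : u b = 0 := by
        by_contra hne
        exact hb ⟨(T.mem b).1.lt_of_ne' hne, (hlt b hαb).trans hv1⟩
      simp [G, extFlux_of_notMem hb, hub, S.hH0]
  simp only [G, hα] at hGα
  linarith

lemma exists_lastCrossing (S : CombSetup p θ D H h g) (T : IsTWSol p c D h g u) {v : ℝ}
    (hv : v ∈ Ioc 0 θ) :
    ∃ α, u α = v ∧ extFlux p D u α = -(c * v + H v) ∧ extFlux p D u α ≤ 0 := by
  have hv1 : v < 1 := hv.2.trans_lt S.hθ1
  obtain ⟨α, hα, hlt⟩ := T.cont.exists_lastCrossing (T.lim_top.eventually_lt_const hv.1)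
    ((T.lim_bot.eventually_const_lt hv1).exists.imp fun _ => le_of_lt)
  exact ⟨α, hα, T.extFlux_eq_of_lastCrossing S hv hα hlt,
    T.extFlux_nonpos_of_lastCrossing S (hα ▸ ⟨hv.1, hv1⟩) (hα ▸ hlt)⟩

lemma add_h_zero_nonneg (S : CombSetup p θ D H h g) (T : IsTWSol p c D h g u) :
    0 ≤ c + h 0 := by
  have hcross : ∀ v ∈ Ioc 0 θ, 0 ≤ c * v + H v := fun v hv => by
    obtain ⟨α, -, hFα, hF_nonpos⟩ := T.exists_lastCrossing S hv
    linarith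
  have hderiv : HasDerivWithinAt (fun v => c * v + H v) (c + h 0) (Ioi 0) 0 :=
    (((hasDerivAt_id 0).const_mul c).hasDerivWithinAt.add (S.hHd 0 ⟨le_rfl, zero_le_one⟩)
      |>.mono_of_mem_nhdsWithin (Icc_mem_nhdsGT zero_lt_one)).congr_deriv (by simp)
  refine hderiv.nonneg_of_eventually_le ?_
  filter_upwards [Ioc_mem_nhdsGT S.hθ0] with v hv
  simpa [S.hH0] using hcross v hv

lemma hasDerivAt_lyapunov (S : CombSetup p θ D H h g) (T : IsTWSol p c D h g u) {ξ : ℝ}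
    (hξ : u ξ ∈ Ioo (0 : ℝ) 1) :
    HasDerivAt (fun ξ => |extFlux p D u ξ| ^ pconj p + pconj p * reactionPrimitive p D g (u ξ))
      (-(pconj p * (c + h (u ξ)) * D (u ξ) ^ (pconj p - 1) * deriv u ξ ^ 2)) ξ := by
  have hF := (hasDerivAt_abs_rpow (extFlux p D u ξ) (one_lt_pconj S.hp)).comp ξ
    (T.hasDerivAt_extFlux hξ)
  have hΓ := ((S.hasDerivAt_reactionPrimitive hξ).comp ξ (T.hasDerivAt hξ)).const_mul (pconj p)
  refine (hF.add hΓ).congr_deriv ?_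
  rw [mul_assoc (pconj p), extFlux_of_mem hξ, flux,
    abs_rpow_pconj_sub_two_mul_flux S.hp (S.hDpos _ hξ)]
  ring

/-- `|F|^{p'} + p' ∫₀^u D^{p'-1} g` does not increase while `0 < u < 1` (as `c + h ≥ 0`),
equals `p' ∫₀¹ D^{p'-1} g` at `-∞`, and is at most that where `u ∈ {0, 1}`. -/
lemma abs_extFlux_rpow_le (S : CombSetup p θ D H h g) (T : IsTWSol p c D h g u)
    (hch : ∀ w ∈ Icc (0 : ℝ) 1, 0 ≤ c + h w) {α : ℝ} (hα : u α = θ) :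
    |extFlux p D u α| ^ pconj p ≤ pconj p * ∫ v in Ioo (0 : ℝ) 1, D v ^ (pconj p - 1) * g v := by
  set q := pconj p
  have hq : 0 < q := by linarith [one_lt_pconj S.hp]
  set M := fun ξ => |extFlux p D u ξ| ^ q + q * reactionPrimitive p D g (u ξ)
  have hMcont : Continuous M :=
    (T.continuous_extFlux.abs.rpow_const fun _ => Or.inr hq.le).add
      (continuous_const.mul (S.continuousOn_reactionPrimitive.comp_continuous T.cont T.mem))
  have hMα : M α = |extFlux p D u α| ^ q := by
    simp [M, hα, S.reactionPrimitive_eq_zero ⟨S.hθ0.le, le_rfl⟩]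
  rw [← hMα, ← reactionPrimitive_one]
  refine le_of_tendsto_atBot_of_gaps T.isClosed_setOf_notMem_Ioo
    (by simpa [hα] using And.intro S.hθ0 S.hθ1) (fun x hxα hgap => ?_) ?_ ?_
  · have hmem : ∀ ξ ∈ Ioo x α, u ξ ∈ Ioo (0 : ℝ) 1 := fun ξ hξ =>
      by_contra fun h => disjoint_left.mp hgap hξ h
    refine le_of_hasDerivAt_nonpos hxα.le hMcont.continuousOn
      (fun ξ hξ => T.hasDerivAt_lyapunov S (hmem ξ hξ)) fun ξ hξ => ?_
    have := mul_nonneg (mul_nonneg (mul_nonneg hq.le (hch _ (T.mem ξ)))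
      (Real.rpow_nonneg (S.hDpos _ (hmem ξ hξ)).le (q - 1))) (sq_nonneg (deriv u ξ))
    linarith
  · have hF := ((continuous_abs.rpow_const fun _ => Or.inr hq.le).tendsto 0).comp
      T.tendsto_extFlux_atBot
    have hΓ := ((S.continuousOn_reactionPrimitive 1 ⟨zero_le_one, le_rfl⟩).tendsto.comp
      T.tendsto_nhdsWithin_atBot).const_mul q
    simpa [M, Real.zero_rpow hq.ne'] using hF.add hΓ
  · intro a ha _
    simp only [M, extFlux_of_notMem ha, abs_zero, Real.zero_rpow hq.ne', zero_add]
    exact mul_le_mul_of_nonneg_left (S.reactionPrimitive_le_one (T.mem a)) hq.le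

end IsTWSol

/-- Corollary: Nonexistence for all speeds.
If the nonexistence inequality is strict and `h_m = h(0)`, then there is no solution
for any `c ∈ ℝ`. -/
theorem stmt1 (p θ : ℝ) (D H h g : ℝ → ℝ) (S : CombSetup p θ D H h g)
    (hmain : θ * sInf (h '' Icc 0 1) +
      (pconj p * ∫ v in Ioo (0 : ℝ) 1, D v ^ (pconj p - 1) * g v) ^ (1 / pconj p) < H θ)
    (hmin : sInf (h '' Icc 0 1) = h 0) :
    ∀ c : ℝ, ∀ u : ℝ → ℝ, ¬ IsTWSol p c D h g u := by
  intro c u T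
  set q := pconj p
  set I := ∫ v in Ioo (0 : ℝ) 1, D v ^ (q - 1) * g v
  have hq : 0 < q := by linarith [one_lt_pconj S.hp]
  have hch0 := T.add_h_zero_nonneg S
  have hch : ∀ w ∈ Icc (0 : ℝ) 1, 0 ≤ c + h w := fun w hw => by
    have hle := csInf_le (isCompact_Icc.image_of_continuousOn S.hh).bddBelow (mem_image_of_mem h hw)
    linarith
  obtain ⟨α, hα, hFα, hF_nonpos⟩ := T.exists_lastCrossing S ⟨S.hθ0, le_rfl⟩
  have hFbound : |extFlux p D u α| ≤ (q * I) ^ (1 / q) := by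
    have hI := T.abs_extFlux_rpow_le S hch hα
    rwa [one_div, Real.le_rpow_inv_iff_of_pos (abs_nonneg _)
      ((Real.rpow_nonneg (abs_nonneg _) _).trans hI) hq]
  rw [abs_of_nonpos hF_nonpos, hFα] at hFbound
  rw [hmin] at hmain
  have hθc := mul_nonneg S.hθ0.le hch0
  linarith
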